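/- (Theorem 1.) Let Y = ΦX + E, where Φ ∈ ℂ^{M×N} has ΦΦ* invertible, X ∈ ℂ^{N×L} is s row-sparse, and E ∈ ℂ^{M×L}. Let f: ℕ → ℕ be non-decreasing with f(j) ≥ s for all j ≥ 1, and set f(0) = 0. Fix k ≥ 1, and suppose δ < 1 is a restricted isometry constant of order s + f(k) + f(k−1) for Φ, γ is a preconditioned restricted isometry constant of order s + f(k) + f(k−1) for Φ, θ is an upper restricted isometry constant of order s + f(k) for (ΦΦ*)⁻¹Φ, and α ≥ 1. Let W⁰ = 0 and for each j = 1,…,k suppose: X^j = W^{j−1} + Φ*(ΦΦ*)⁻¹(Y − ΦW^{j−1}); X^j = Q^j R^j with Q^j ∈ ℂ^{N×L} having orthonormal columns and R^j ∈ ℂ^{L×L} invertible with σ_max(R^j) ≤ α·σ_min(R^j); T_j ⊆ {1,…,N} has |T_j| = f(j) and ‖Q^j_{i·}‖₂ ≥ ‖Q^j_{m·}‖₂ for all i ∈ T_j, m ∉ T_j; Φ_{T_j}*Φ_{T_j} is invertible; and W^j is the feedback W^j_(T_j^c) = 0, W^j_{(T_j)} = X^j_{(T_j)} + (Φ_{T_j}*Φ_{T_j})⁻¹Φ_{T_j}*Φ_{T_j^c}X^j_{(T_j^c)}.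 Then, with ρ = √(2α²γ²/(1 − δ²)) and κ = √(1+δ)/(1−δ) + √(2α²(1+θ))/√(1−δ²), it holds that ‖X − W^k‖_F ≤ ρ^k·‖X − W⁰‖_F + κ·(∑_{j=0}^{k−1} ρ^j)·‖E‖_F. -/

import Mathlib

open Matrix BigOperators

/-- Frobenius norm of a complex matrix. -/
noncomputable def frobNorm {m n : Type*} [Fintype m] [Fintype n] (A : Matrix m n ℂ) : ℝ :=
  Real.sqrt (∑ i, ∑ j, ‖A i j‖ ^ 2)

open scoped Classical in
/-- The row support of a matrix: indices of its nonzero rows. -/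
noncomputable def rowSupp {N L : ℕ} (X : Matrix (Fin N) (Fin L) ℂ) : Finset (Fin N) :=
  Finset.univ.filter (fun i => X i ≠ 0)

/-- `X_(T)`: the matrix obtained from `X` by zeroing every row with index outside `T`. -/
def rowRestrict {N L : ℕ} (T : Finset (Fin N)) (X : Matrix (Fin N) (Fin L) ℂ) :
    Matrix (Fin N) (Fin L) ℂ :=
  fun i j => if i ∈ T then X i j else 0

/-- Euclidean norm of a complex vector. -/
noncomputable def vecNorm {ι : Type*} [Fintype ι] (v : ι → ℂ) : ℝ :=
  Real.sqrt (∑ i, ‖v i‖ ^ 2)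

/-- `Φ_T`: the submatrix of columns of `Φ` indexed by `T`. -/
def colSub {M N : ℕ} (Φ : Matrix (Fin M) (Fin N) ℂ) (T : Finset (Fin N)) :
    Matrix (Fin M) {x // x ∈ T} ℂ :=
  fun i j => Φ i j.val

/-- `X_{(T)}`: the submatrix of rows of `X` indexed by `T`. -/
def rowSub {N L : ℕ} (T : Finset (Fin N)) (X : Matrix (Fin N) (Fin L) ℂ) :
    Matrix {x // x ∈ T} (Fin L) ℂ :=
  fun i j => X i.val j

/-- The set of values `‖R v‖` over unit vectors `v` (the "singular value range"). -/
noncomputable def sigmaSet {L : ℕ} (R : Matrix (Fin L) (Fin L) ℂ) : Set ℝ :=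
  {c | ∃ v : Fin L → ℂ, vecNorm v = 1 ∧ c = vecNorm (R.mulVec v)}

/-- The largest singular value of `R`. -/
noncomputable def sigmaMax {L : ℕ} (R : Matrix (Fin L) (Fin L) ℂ) : ℝ :=
  sSup (sigmaSet R)

/-- The smallest singular value of `R` (for invertible `R`). -/
noncomputable def sigmaMin {L : ℕ} (R : Matrix (Fin L) (Fin L) ℂ) : ℝ :=
  sInf (sigmaSet R)

/-- Spectral (operator) norm of a square complex matrix. -/
noncomputable def specNorm {ι : Type*} [Fintype ι] (A : Matrix ι ι ℂ) : ℝ :=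
  sSup {c | ∃ v : ι → ℂ, vecNorm v = 1 ∧ c = vecNorm (A.mulVec v)}

/-- `δ` is a restricted isometry constant (RIC) of order `t` for `A`, relative to matrices with
`L` columns: `(1-δ)‖Z‖_F² ≤ ‖AZ‖_F² ≤ (1+δ)‖Z‖_F²` for every `t` row-sparse `Z`. -/
def IsRIC {M N : ℕ} (L : ℕ) (A : Matrix (Fin M) (Fin N) ℂ) (t : ℕ) (δ : ℝ) : Prop :=
  ∀ Z : Matrix (Fin N) (Fin L) ℂ, (rowSupp Z).card ≤ t →
    (1 - δ) * frobNorm Z ^ 2 ≤ frobNorm (A * Z) ^ 2 ∧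
      frobNorm (A * Z) ^ 2 ≤ (1 + δ) * frobNorm Z ^ 2

/-- `γ` is a preconditioned restricted isometry constant (P-RIC) of order `t` for `Φ`:
`(1-γ)‖Z‖_F² ≤ Re tr((ΦZ)* (ΦΦ*)⁻¹ (ΦZ))` for every `t` row-sparse `Z`. -/
def IsPRIC {M N : ℕ} (L : ℕ) (Φ : Matrix (Fin M) (Fin N) ℂ) (t : ℕ) (γ : ℝ) : Prop :=
  ∀ Z : Matrix (Fin N) (Fin L) ℂ, (rowSupp Z).card ≤ t →
    (1 - γ) * frobNorm Z ^ 2 ≤ (Matrix.trace ((Φ * Z)ᴴ * ((Φ * Φᴴ)⁻¹ * (Φ * Z)))).re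

/-- `θ` is an upper restricted isometry constant of order `t` for `A`:
`‖AZ‖_F² ≤ (1+θ)‖Z‖_F²` for every `t` row-sparse `Z`. -/
def IsUpperRIC {M N : ℕ} (L : ℕ) (A : Matrix (Fin M) (Fin N) ℂ) (t : ℕ) (θ : ℝ) : Prop :=
  ∀ Z : Matrix (Fin N) (Fin L) ℂ, (rowSupp Z).card ≤ t →
    frobNorm (A * Z) ^ 2 ≤ (1 + θ) * frobNorm Z ^ 2

/-- The least-squares feedback of `X` on the index set `T`:
rows outside `T` are zero and on `T` it equals
`X_{(T)} + (Φ_T* Φ_T)⁻¹ Φ_T* Φ_{T^c} X_{(T^c)}`. -/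
noncomputable def feedback {M N L : ℕ} (Φ : Matrix (Fin M) (Fin N) ℂ) (T : Finset (Fin N))
    (X : Matrix (Fin N) (Fin L) ℂ) : Matrix (Fin N) (Fin L) ℂ :=
  fun i j =>
    if h : i ∈ T then
      (rowSub T X +
        ((colSub Φ T)ᴴ * colSub Φ T)⁻¹ * (colSub Φ T)ᴴ *
          (colSub Φ Tᶜ * rowSub Tᶜ X)) ⟨i, h⟩ j
    else 0

/-!
Write `V = X - W^{j-1}`. Null-space tuning is exact on the row space of `Φ`, so its error
`X - X^j = (I - P) V - Φᴴ (ΦΦᴴ)⁻¹ E`, with `P` the projection onto that row space, is small on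
every sparse set of rows: `‖(I - P) Z‖² ≤ γ ‖Z‖²` for sparse `Z` by the P-RIC, and the noise
contributes `√(1 + θ) ‖E‖` by the upper RIC of `(ΦΦᴴ)⁻¹ Φ`. Since `T_j` collects the largest rows
of `Q^j` and `X^j = Q^j R^j`, the rows of `X^j` on `supp X \ T_j` are at most `α` times those on
`T_j \ supp X`, where `X` vanishes; this bounds the part of `X - W^j` outside `T_j` by
`√2 α (γ ‖V‖ + √(1 + θ) ‖E‖)`. On `T_j` the feedback is a least-squares fit, so the residual is
orthogonal to the columns of `Φ_{T_j}`, and the polarized RIC gives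
`‖(X - W^j)_{T_j}‖ ≤ δ ‖X - W^j‖ + √(1 + δ) ‖E‖`. Pythagoras over `T_j` and its complement
then leaves a quadratic inequality in `‖X - W^j‖`, whose solution is `ρ ‖V‖ + κ ‖E‖`.
-/

lemma le_sqrt_mul_of_sq_le {x y c : ℝ} (hy : 0 ≤ y) (h : x ^ 2 ≤ c * y ^ 2) : x ≤ √c * y :=
  calc x ≤ |x| := le_abs_self x
    _ ≤ √(c * y ^ 2) := Real.abs_le_sqrt h
    _ = √c * y := by rw [Real.sqrt_mul' _ (sq_nonneg y), Real.sqrt_sq hy]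

lemma add_mul_le_sqrt_two_mul {p q r α : ℝ} (hp : 0 ≤ p) (hr : 0 ≤ r) (hα : 1 ≤ α)
    (h : p ^ 2 + q ^ 2 = r ^ 2) : p + α * q ≤ √2 * α * r := by
  have hpq : p + q ≤ √2 * r := le_sqrt_mul_of_sq_le hr (by nlinarith [sq_nonneg (p - q)])
  nlinarith

lemma le_div_sqrt_add_div_of_sq_le {x a b δ : ℝ} (ha : 0 ≤ a) (hb : 0 ≤ b) (hδ0 : 0 ≤ δ)
    (hδ1 : δ < 1) (h : x ^ 2 ≤ (δ * x + b) ^ 2 + a ^ 2) :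
    x ≤ a / √(1 - δ ^ 2) + b / (1 - δ) := by
  have hδ2 : 0 < 1 - δ ^ 2 := by nlinarith
  have hs : 0 < √(1 - δ ^ 2) := Real.sqrt_pos.2 hδ2
  set u := b / (1 - δ)
  rcases le_or_gt x u with hxu | hxu
  · have := div_nonneg ha hs.le
    linarith
  have hbu : b = u * (1 - δ) := (div_mul_cancel₀ b (by linarith)).symm
  have hu : 0 ≤ u := div_nonneg hb (by linarith)
  -- `x² - (δx + b)² = (1 - δ)(x - u)((1 + δ)x + (1 - δ)u) ≥ (1 - δ²)(x - u)²`
  have hsq : (√(1 - δ ^ 2) * (x - u)) ^ 2 ≤ a ^ 2 := by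
    rw [mul_pow, Real.sq_sqrt hδ2.le]
    rw [hbu] at h
    nlinarith [mul_nonneg (mul_nonneg (sub_nonneg.2 hδ1.le) hu) (sub_pos.2 hxu).le]
  have := le_of_pow_le_pow_left₀ two_ne_zero ha hsq
  rw [mul_comm, ← le_div_iff₀ hs] at this
  linarith

lemma le_geom_of_succ_le {e : ℕ → ℝ} {ρ c : ℝ} (hρ : 0 ≤ ρ) {k : ℕ}
    (h : ∀ j < k, e (j + 1) ≤ ρ * e j + c) :
    e k ≤ ρ ^ k * e 0 + c * ∑ j ∈ Finset.range k, ρ ^ j := by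
  induction k with
  | zero => simp
  | succ k ih =>
    have ih := ih fun j hj => h j (Nat.lt_succ_of_lt hj)
    calc e (k + 1) ≤ ρ * (ρ ^ k * e 0 + c * ∑ j ∈ Finset.range k, ρ ^ j) + c :=
          (h k k.lt_succ_self).trans (by gcongr)
      _ = ρ ^ (k + 1) * e 0 + c * ∑ j ∈ Finset.range (k + 1), ρ ^ j := by
          rw [geom_sum_succ]; ring

lemma le_of_sq_le_mul {x c : ℝ} (hc : 0 ≤ c) (h : x ^ 2 ≤ x * c) : x ≤ c := by
  nlinarith

/-- The Frobenius inner product `tr (Aᴴ B)` is the inner product of this Euclidean space. -/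
def frobEmb {m n : Type*} : Matrix m n ℂ →ₗ[ℂ] EuclideanSpace ℂ (m × n) where
  toFun A := WithLp.toLp 2 fun q => A q.1 q.2
  map_add' _ _ := rfl
  map_smul' _ _ := rfl

local notation "⟪" A ", " B "⟫_F" => (inner ℂ (frobEmb A) (frobEmb B) : ℂ)

section Frobenius

variable {m n p : Type*}

lemma frobEmb_apply (A : Matrix m n ℂ) : frobEmb A = WithLp.toLp 2 fun q => A q.1 q.2 := rfl

lemma frobEmb_injective : Function.Injective (frobEmb : Matrix m n ℂ → _) :=
  fun _ _ h => Matrix.ext fun i j => congrFun (congrArg WithLp.ofLp h) (i, j)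

variable [Fintype m] [Fintype n] [Fintype p]

lemma frobNorm_eq_norm (A : Matrix m n ℂ) : frobNorm A = ‖frobEmb A‖ := by
  rw [frobNorm, EuclideanSpace.norm_eq, Fintype.sum_prod_type]
  rfl

lemma frobNorm_nonneg (A : Matrix m n ℂ) : 0 ≤ frobNorm A := Real.sqrt_nonneg _

lemma frobNorm_eq_zero {A : Matrix m n ℂ} : frobNorm A = 0 ↔ A = 0 := by
  rw [frobNorm_eq_norm, norm_eq_zero, ← map_zero frobEmb, frobEmb_injective.eq_iff]

lemma frobNorm_neg (A : Matrix m n ℂ) : frobNorm (-A) = frobNorm A := by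
  rw [frobNorm_eq_norm, frobNorm_eq_norm, map_neg, norm_neg]

lemma frobNorm_add_le (A B : Matrix m n ℂ) : frobNorm (A + B) ≤ frobNorm A + frobNorm B := by
  simp only [frobNorm_eq_norm, map_add]
  exact norm_add_le _ _

lemma frobNorm_sq (A : Matrix m n ℂ) : frobNorm A ^ 2 = ∑ i, ∑ j, ‖A i j‖ ^ 2 :=
  Real.sq_sqrt (by positivity)

lemma frobNorm_sq_eq_re_inner (A : Matrix m n ℂ) : frobNorm A ^ 2 = (⟪A, A⟫_F).re := by
  rw [frobNorm_eq_norm, ← inner_self_eq_norm_sq (𝕜 := ℂ)]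
  rfl

lemma inner_frobEmb (A B : Matrix m n ℂ) :
    ⟪A, B⟫_F = ∑ i, ∑ j, starRingEnd ℂ (A i j) * B i j := by
  simp [frobEmb_apply, PiLp.inner_apply, Fintype.sum_prod_type, mul_comm]

lemma inner_frobEmb_eq_trace (A B : Matrix m n ℂ) : ⟪A, B⟫_F = trace (Aᴴ * B) := by
  rw [inner_frobEmb, trace, Finset.sum_comm]
  rfl

lemma inner_frobEmb_mul_left (C : Matrix p m ℂ) (A : Matrix m n ℂ) (B : Matrix p n ℂ) :
    ⟪C * A, B⟫_F = ⟪A, Cᴴ * B⟫_F := by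
  rw [inner_frobEmb_eq_trace, inner_frobEmb_eq_trace, conjTranspose_mul, Matrix.mul_assoc]

lemma abs_re_inner_frobEmb_le (A B : Matrix m n ℂ) :
    |(⟪A, B⟫_F).re| ≤ frobNorm A * frobNorm B := by
  rw [frobNorm_eq_norm, frobNorm_eq_norm]
  exact (Complex.abs_re_le_norm _).trans (norm_inner_le_norm _ _)

lemma frobNorm_add_sq (A B : Matrix m n ℂ) :
    frobNorm (A + B) ^ 2 = frobNorm A ^ 2 + 2 * (⟪A, B⟫_F).re + frobNorm B ^ 2 := by
  simp only [frobNorm_eq_norm, map_add]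
  exact norm_add_sq (𝕜 := ℂ) _ _

lemma frobNorm_sub_sq (A B : Matrix m n ℂ) :
    frobNorm (A - B) ^ 2 = frobNorm A ^ 2 - 2 * (⟪A, B⟫_F).re + frobNorm B ^ 2 := by
  simp only [frobNorm_eq_norm, map_sub]
  exact norm_sub_sq (𝕜 := ℂ) _ _

end Frobenius

lemma vecNorm_nonneg {ι : Type*} [Fintype ι] (v : ι → ℂ) : 0 ≤ vecNorm v := Real.sqrt_nonneg _

lemma vecNorm_sq {ι : Type*} [Fintype ι] (v : ι → ℂ) : vecNorm v ^ 2 = ∑ i, ‖v i‖ ^ 2 :=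
  Real.sq_sqrt (by positivity)

section Rows

variable {N L : ℕ}

lemma rowSupp_subset_iff {X : Matrix (Fin N) (Fin L) ℂ} {T : Finset (Fin N)} :
    rowSupp X ⊆ T ↔ ∀ i ∉ T, X i = 0 := by
  classical
  simp only [rowSupp, Finset.subset_iff, Finset.mem_filter, Finset.mem_univ, true_and]
  exact forall_congr' fun i => not_imp_comm

lemma row_eq_zero_of_notMem_rowSupp {X : Matrix (Fin N) (Fin L) ℂ} {i : Fin N}
    (h : i ∉ rowSupp X) : X i = 0 :=
  rowSupp_subset_iff.1 subset_rfl i h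

lemma rowSupp_sub_subset (A B : Matrix (Fin N) (Fin L) ℂ) :
    rowSupp (A - B) ⊆ rowSupp A ∪ rowSupp B := by
  refine rowSupp_subset_iff.2 fun i hi => funext fun j => ?_
  rw [Finset.mem_union, not_or] at hi
  simp [congrFun (row_eq_zero_of_notMem_rowSupp hi.1) j,
    congrFun (row_eq_zero_of_notMem_rowSupp hi.2) j]

lemma rowSupp_add_subset (A B : Matrix (Fin N) (Fin L) ℂ) :
    rowSupp (A + B) ⊆ rowSupp A ∪ rowSupp B := by
  refine rowSupp_subset_iff.2 fun i hi => funext fun j => ?_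
  rw [Finset.mem_union, not_or] at hi
  simp [congrFun (row_eq_zero_of_notMem_rowSupp hi.1) j,
    congrFun (row_eq_zero_of_notMem_rowSupp hi.2) j]

lemma rowSupp_smul_subset (c : ℂ) (A : Matrix (Fin N) (Fin L) ℂ) :
    rowSupp (c • A) ⊆ rowSupp A :=
  rowSupp_subset_iff.2 fun i hi => funext fun j => by
    simp [congrFun (row_eq_zero_of_notMem_rowSupp hi) j]

lemma rowSupp_rowRestrict_subset (T : Finset (Fin N)) (A : Matrix (Fin N) (Fin L) ℂ) :
    rowSupp (rowRestrict T A) ⊆ T :=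
  rowSupp_subset_iff.2 fun i hi => funext fun j => by simp [rowRestrict, hi]

lemma rowSupp_feedback_subset {M : ℕ} (Φ : Matrix (Fin M) (Fin N) ℂ) (T : Finset (Fin N))
    (X : Matrix (Fin N) (Fin L) ℂ) : rowSupp (feedback Φ T X) ⊆ T :=
  rowSupp_subset_iff.2 fun i hi => funext fun j => by simp [feedback, hi]

lemma card_rowSupp_sub_le {X W : Matrix (Fin N) (Fin L) ℂ} {T : Finset (Fin N)}
    (hW : rowSupp W ⊆ T) : (rowSupp (X - W)).card ≤ (rowSupp X).card + T.card :=
  (Finset.card_le_card ((rowSupp_sub_subset X W).trans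
    (Finset.union_subset_union subset_rfl hW))).trans (Finset.card_union_le _ _)

lemma rowRestrict_add (T : Finset (Fin N)) (A B : Matrix (Fin N) (Fin L) ℂ) :
    rowRestrict T (A + B) = rowRestrict T A + rowRestrict T B := by
  ext i j
  by_cases hi : i ∈ T <;> simp [rowRestrict, hi]

lemma rowRestrict_sub (T : Finset (Fin N)) (A B : Matrix (Fin N) (Fin L) ℂ) :
    rowRestrict T (A - B) = rowRestrict T A - rowRestrict T B := by
  ext i j
  by_cases hi : i ∈ T <;> simp [rowRestrict, hi]

lemma rowRestrict_eq_self {T : Finset (Fin N)} {A : Matrix (Fin N) (Fin L) ℂ}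
    (h : rowSupp A ⊆ T) : rowRestrict T A = A := by
  ext i j
  by_cases hi : i ∈ T
  · simp [rowRestrict, hi]
  · simp [rowRestrict, hi, congrFun (rowSupp_subset_iff.1 h i hi) j]

lemma rowRestrict_eq_zero {T : Finset (Fin N)} {A : Matrix (Fin N) (Fin L) ℂ}
    (h : Disjoint T (rowSupp A)) : rowRestrict T A = 0 := by
  ext i j
  by_cases hi : i ∈ T
  · have := row_eq_zero_of_notMem_rowSupp (h.notMem_of_mem_left_finset hi)
    simp [rowRestrict, hi, congrFun this j]
  · simp [rowRestrict, hi]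

lemma frobNorm_rowRestrict_sq (T : Finset (Fin N)) (A : Matrix (Fin N) (Fin L) ℂ) :
    frobNorm (rowRestrict T A) ^ 2 = ∑ i ∈ T, vecNorm (A i) ^ 2 := by
  have hrow (i : Fin N) :
      ∑ j, ‖rowRestrict T A i j‖ ^ 2 = if i ∈ T then vecNorm (A i) ^ 2 else 0 := by
    by_cases hi : i ∈ T <;> simp [rowRestrict, hi, vecNorm_sq]
  simp only [frobNorm_sq, hrow, Finset.sum_ite_mem, Finset.univ_inter]

lemma frobNorm_sq_eq_add_compl (T : Finset (Fin N)) (A : Matrix (Fin N) (Fin L) ℂ) :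
    frobNorm A ^ 2 = frobNorm (rowRestrict T A) ^ 2 + frobNorm (rowRestrict Tᶜ A) ^ 2 := by
  rw [frobNorm_rowRestrict_sq, frobNorm_rowRestrict_sq, Finset.sum_add_sum_compl, frobNorm_sq]
  simp only [vecNorm_sq]

lemma inner_rowRestrict_left (T : Finset (Fin N)) (A B : Matrix (Fin N) (Fin L) ℂ) :
    ⟪rowRestrict T A, B⟫_F = ⟪rowRestrict T A, rowRestrict T B⟫_F := by
  simp only [inner_frobEmb]
  refine Finset.sum_congr rfl fun i _ => Finset.sum_congr rfl fun j _ => ?_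
  by_cases hi : i ∈ T <;> simp [rowRestrict, hi]

end Rows

section SingularValues

variable {L : ℕ}

lemma vecNorm_eq_norm {ι : Type*} [Fintype ι] (v : ι → ℂ) :
    vecNorm v = ‖(WithLp.toLp 2 v : EuclideanSpace ℂ ι)‖ := by
  rw [vecNorm, EuclideanSpace.norm_eq]

lemma sigmaSet_eq_image (R : Matrix (Fin L) (Fin L) ℂ) :
    sigmaSet R = (fun x => ‖toEuclideanCLM (n := Fin L) (𝕜 := ℂ) R x‖) '' Metric.sphere 0 1 := by
  ext c
  constructor
  · rintro ⟨v, hv, rfl⟩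
    exact ⟨WithLp.toLp 2 v, by simpa [vecNorm_eq_norm] using hv, by simp [vecNorm_eq_norm]⟩
  · rintro ⟨x, hx, rfl⟩
    exact ⟨x.ofLp, by simpa [vecNorm_eq_norm] using hx, by simp [vecNorm_eq_norm]; rfl⟩

lemma sigmaMax_eq_norm (R : Matrix (Fin L) (Fin L) ℂ) :
    sigmaMax R = ‖toEuclideanCLM (n := Fin L) (𝕜 := ℂ) R‖ := by
  rw [sigmaMax, sigmaSet_eq_image, ContinuousLinearMap.sSup_sphere_eq_norm]

lemma sigmaMax_nonneg (R : Matrix (Fin L) (Fin L) ℂ) : 0 ≤ sigmaMax R := by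
  rw [sigmaMax_eq_norm]
  positivity

lemma vecNorm_mulVec_le (R : Matrix (Fin L) (Fin L) ℂ) (v : Fin L → ℂ) :
    vecNorm (R *ᵥ v) ≤ sigmaMax R * vecNorm v := by
  rw [sigmaMax_eq_norm, vecNorm_eq_norm, vecNorm_eq_norm, ← toEuclideanCLM_toLp]
  exact (toEuclideanCLM (n := Fin L) (𝕜 := ℂ) R).le_opNorm _

lemma sigmaMax_conjTranspose (R : Matrix (Fin L) (Fin L) ℂ) : sigmaMax Rᴴ = sigmaMax R := by
  rw [sigmaMax_eq_norm, sigmaMax_eq_norm, ← star_eq_conjTranspose, map_star]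
  exact norm_star (toEuclideanCLM (n := Fin L) (𝕜 := ℂ) R)

lemma vecNorm_vecMul_le (R : Matrix (Fin L) (Fin L) ℂ) (v : Fin L → ℂ) :
    vecNorm (v ᵥ* R) ≤ sigmaMax R * vecNorm v := by
  have hstar (w : Fin L → ℂ) : vecNorm (star w) = vecNorm w := by simp [vecNorm]
  rw [← hstar, star_vecMul, ← sigmaMax_conjTranspose, ← hstar v]
  exact vecNorm_mulVec_le _ _

lemma sigmaMin_mul_norm_le (R : Matrix (Fin L) (Fin L) ℂ) (x : EuclideanSpace ℂ (Fin L)) :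
    sigmaMin R * ‖x‖ ≤ ‖toEuclideanCLM (n := Fin L) (𝕜 := ℂ) R x‖ := by
  rcases eq_or_ne x 0 with hx | hx
  · simp [hx]
  have hbdd : BddBelow (sigmaSet R) := ⟨0, by rintro _ ⟨_, _, rfl⟩; exact vecNorm_nonneg _⟩
  have hunit : (‖x‖⁻¹ : ℂ) • x ∈ Metric.sphere (0 : EuclideanSpace ℂ (Fin L)) 1 := by
    simp [norm_smul, hx]
  have hle := csInf_le hbdd (sigmaSet_eq_image R ▸ Set.mem_image_of_mem _ hunit)
  simp only [map_smul, norm_smul, norm_inv, Complex.norm_real, norm_norm] at hle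
  calc sigmaMin R * ‖x‖ ≤ ‖x‖⁻¹ * ‖toEuclideanCLM (n := Fin L) (𝕜 := ℂ) R x‖ * ‖x‖ := by
        gcongr; exact hle
    _ = ‖toEuclideanCLM (n := Fin L) (𝕜 := ℂ) R x‖ := by field_simp

lemma sigmaMax_mul_sigmaMax_inv_le {R : Matrix (Fin L) (Fin L) ℂ} {α : ℝ} (hR : IsUnit R)
    (hα : 0 ≤ α) (hcond : sigmaMax R ≤ α * sigmaMin R) : sigmaMax R * sigmaMax R⁻¹ ≤ α := by
  have hmin : 0 ≤ sigmaMin R := Real.sInf_nonneg fun _ ⟨_, _, hc⟩ => hc ▸ vecNorm_nonneg _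
  rcases hmin.eq_or_lt with hmin | hmin
  · have : sigmaMax R = 0 := le_antisymm (by simpa [← hmin] using hcond) (sigmaMax_nonneg R)
    simpa [this] using hα
  have hinv : sigmaMax R⁻¹ ≤ (sigmaMin R)⁻¹ := by
    rw [sigmaMax_eq_norm]
    refine ContinuousLinearMap.opNorm_le_bound _ (by positivity) fun x => ?_
    have hRR : toEuclideanCLM (n := Fin L) (𝕜 := ℂ) R (toEuclideanCLM (n := Fin L) (𝕜 := ℂ) R⁻¹ x)
        = x := by
      rw [← mul_apply_eq_comp, ← map_mul,
        mul_nonsing_inv R ((isUnit_iff_isUnit_det R).mp hR), map_one,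
        one_apply_eq_self]
    have := sigmaMin_mul_norm_le R (toEuclideanCLM (n := Fin L) (𝕜 := ℂ) R⁻¹ x)
    rw [hRR] at this
    rw [inv_mul_eq_div, le_div_iff₀ hmin]
    linarith
  calc sigmaMax R * sigmaMax R⁻¹ ≤ sigmaMax R * (sigmaMin R)⁻¹ := by
        gcongr; exact sigmaMax_nonneg R
    _ ≤ α := by rw [← div_eq_mul_inv, div_le_iff₀ hmin]; exact hcond

end SingularValues

lemma sum_sdiff_le_sum_sdiff {ι : Type*} [DecidableEq ι] {S T : Finset ι} {g : ι → ℝ}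
    (hg : ∀ i, 0 ≤ g i) (hcard : S.card ≤ T.card) (hsel : ∀ i ∈ T, ∀ m ∉ T, g m ≤ g i) :
    ∑ i ∈ S \ T, g i ≤ ∑ i ∈ T \ S, g i := by
  rcases (S \ T).eq_empty_or_nonempty with h | h
  · rw [h, Finset.sum_empty]
    exact Finset.sum_nonneg fun i _ => hg i
  obtain ⟨m, hm, hmax⟩ := Finset.exists_max_image (S \ T) g h
  have hle (i) (hi : i ∈ T \ S) : g m ≤ g i :=
    hsel i (Finset.mem_sdiff.1 hi).1 m (Finset.mem_sdiff.1 hm).2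
  calc ∑ i ∈ S \ T, g i ≤ (S \ T).card • g m := Finset.sum_le_card_nsmul _ _ _ hmax
    _ ≤ (T \ S).card • g m :=
        nsmul_le_nsmul_left (hg m) (Finset.card_sdiff_le_card_sdiff_iff.2 hcard)
    _ ≤ ∑ i ∈ T \ S, g i := Finset.card_nsmul_le_sum _ _ _ hle

section HardThresholding

variable {N L : ℕ}

/-- Rows of `Q * R` and of `Q` are comparable up to the condition number of `R`, which `hcond`
bounds by `α`. -/
lemma frobNorm_rowRestrict_sdiff_le {Xs Q : Matrix (Fin N) (Fin L) ℂ}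
    {R : Matrix (Fin L) (Fin L) ℂ} {S T : Finset (Fin N)} {α : ℝ} (hXs : Xs = Q * R)
    (hR : IsUnit R) (hα : 0 ≤ α) (hcond : sigmaMax R ≤ α * sigmaMin R) (hcard : S.card ≤ T.card)
    (hsel : ∀ i ∈ T, ∀ m ∉ T, vecNorm (Q m) ≤ vecNorm (Q i)) :
    frobNorm (rowRestrict (S \ T) Xs) ≤ α * frobNorm (rowRestrict (T \ S) Xs) := by
  have hmax := sigmaMax_nonneg R
  have hXs_row (i : Fin N) : Xs i = Q i ᵥ* R := by rw [hXs]; rfl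
  have hQ : Q = Xs * R⁻¹ := by
    rw [hXs, Matrix.mul_nonsing_inv_cancel_right R Q ((isUnit_iff_isUnit_det R).mp hR)]
  have hQ_row (i : Fin N) : Q i = Xs i ᵥ* R⁻¹ := by rw [hQ]; rfl
  have hsum : ∑ i ∈ S \ T, vecNorm (Xs i) ^ 2 ≤
      (sigmaMax R * sigmaMax R⁻¹) ^ 2 * ∑ i ∈ T \ S, vecNorm (Xs i) ^ 2 := by
    calc ∑ i ∈ S \ T, vecNorm (Xs i) ^ 2
        ≤ ∑ i ∈ S \ T, sigmaMax R ^ 2 * vecNorm (Q i) ^ 2 := by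
          refine Finset.sum_le_sum fun i _ => ?_
          rw [hXs_row, ← mul_pow]
          exact pow_le_pow_left₀ (vecNorm_nonneg _) (vecNorm_vecMul_le R (Q i)) 2
      _ ≤ ∑ i ∈ T \ S, sigmaMax R ^ 2 * vecNorm (Q i) ^ 2 :=
          sum_sdiff_le_sum_sdiff (fun _ => by positivity) hcard fun i hi m hm =>
            mul_le_mul_of_nonneg_left
              (pow_le_pow_left₀ (vecNorm_nonneg _) (hsel i hi m hm) 2) (sq_nonneg _)
      _ ≤ ∑ i ∈ T \ S, (sigmaMax R * sigmaMax R⁻¹) ^ 2 * vecNorm (Xs i) ^ 2 := by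
          refine Finset.sum_le_sum fun i _ => ?_
          rw [hQ_row, mul_pow, mul_assoc]
          refine mul_le_mul_of_nonneg_left ?_ (sq_nonneg _)
          rw [← mul_pow]
          exact pow_le_pow_left₀ (vecNorm_nonneg _) (vecNorm_vecMul_le _ _) 2
      _ = _ := by rw [Finset.mul_sum]
  refine le_of_pow_le_pow_left₀ two_ne_zero (mul_nonneg hα (frobNorm_nonneg _)) ?_
  rw [mul_pow, frobNorm_rowRestrict_sq, frobNorm_rowRestrict_sq]
  refine hsum.trans (mul_le_mul_of_nonneg_right ?_ (Finset.sum_nonneg fun _ _ => sq_nonneg _))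
  exact pow_le_pow_left₀ (mul_nonneg hmax (sigmaMax_nonneg _))
    (sigmaMax_mul_sigmaMax_inv_le hR hα hcond) 2

end HardThresholding

section Projection

variable {m n k : Type*} [Fintype m] [DecidableEq m] [Fintype n] [Fintype k]

noncomputable def rowSpaceProj (Φ : Matrix m n ℂ) : Matrix n n ℂ := Φᴴ * ((Φ * Φᴴ)⁻¹ * Φ)

lemma isHermitian_rowSpaceProj (Φ : Matrix m n ℂ) : (rowSpaceProj Φ).IsHermitian := by
  rw [IsHermitian, rowSpaceProj, conjTranspose_mul, conjTranspose_mul,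
    (isHermitian_mul_conjTranspose_self Φ).inv.eq,
    conjTranspose_conjTranspose, Matrix.mul_assoc]

lemma isIdempotentElem_rowSpaceProj {Φ : Matrix m n ℂ} (hinv : IsUnit (Φ * Φᴴ)) :
    IsIdempotentElem (rowSpaceProj Φ) := by
  simp only [IsIdempotentElem, rowSpaceProj, Matrix.mul_assoc]
  rw [← Matrix.mul_assoc Φ Φᴴ,
    nonsing_inv_mul_cancel_left _ _ ((isUnit_iff_isUnit_det _).mp hinv)]

variable {P : Matrix n n ℂ}

lemma inner_proj_sub_proj (hP : P.IsHermitian) (hPP : IsIdempotentElem P) (Z V : Matrix n k ℂ) :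
    ⟪P * Z, V - P * V⟫_F = 0 := by
  rw [inner_frobEmb_mul_left, hP.eq, Matrix.mul_sub, ← Matrix.mul_assoc, hPP.eq, sub_self, map_zero,
    inner_zero_right]

lemma inner_sub_proj_right (hP : P.IsHermitian) (hPP : IsIdempotentElem P) (Z V : Matrix n k ℂ) :
    ⟪Z, V - P * V⟫_F = ⟪Z - P * Z, V - P * V⟫_F := by
  rw [map_sub frobEmb Z (P * Z), inner_sub_left, inner_proj_sub_proj hP hPP, sub_zero]

lemma frobNorm_sub_proj_sq (hP : P.IsHermitian) (hPP : IsIdempotentElem P) (Z : Matrix n k ℂ) :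
    frobNorm (Z - P * Z) ^ 2 = frobNorm Z ^ 2 - frobNorm (P * Z) ^ 2 := by
  have h := frobNorm_add_sq (P * Z) (Z - P * Z)
  rw [add_sub_cancel, inner_proj_sub_proj hP hPP, Complex.zero_re] at h
  linarith

variable {M N L : ℕ}

lemma frobNorm_rowSpaceProj_mul_sq {Φ : Matrix (Fin M) (Fin N) ℂ} (hinv : IsUnit (Φ * Φᴴ))
    (Z : Matrix (Fin N) (Fin L) ℂ) :
    frobNorm (rowSpaceProj Φ * Z) ^ 2 = (trace ((Φ * Z)ᴴ * ((Φ * Φᴴ)⁻¹ * (Φ * Z)))).re := by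
  rw [frobNorm_sq_eq_re_inner, inner_frobEmb_mul_left, (isHermitian_rowSpaceProj Φ).eq,
    ← Matrix.mul_assoc, (isIdempotentElem_rowSpaceProj hinv).eq, inner_frobEmb_eq_trace,
    rowSpaceProj, conjTranspose_mul]
  simp only [Matrix.mul_assoc]

lemma IsPRIC.frobNorm_sub_rowSpaceProj_mul_sq_le {Φ : Matrix (Fin M) (Fin N) ℂ} {t : ℕ} {γ : ℝ}
    (h : IsPRIC L Φ t γ) (hinv : IsUnit (Φ * Φᴴ)) {Z : Matrix (Fin N) (Fin L) ℂ}
    (hZ : (rowSupp Z).card ≤ t) :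
    frobNorm (Z - rowSpaceProj Φ * Z) ^ 2 ≤ γ * frobNorm Z ^ 2 := by
  have := h Z hZ
  rw [← frobNorm_rowSpaceProj_mul_sq hinv] at this
  rw [frobNorm_sub_proj_sq (isHermitian_rowSpaceProj Φ) (isIdempotentElem_rowSpaceProj hinv)]
  linarith

end Projection

section NullSpaceTuning

variable {M N L : ℕ} {Φ : Matrix (Fin M) (Fin N) ℂ}

noncomputable def nullSpaceTuning (Φ : Matrix (Fin M) (Fin N) ℂ) (Y : Matrix (Fin M) (Fin L) ℂ)
    (W : Matrix (Fin N) (Fin L) ℂ) : Matrix (Fin N) (Fin L) ℂ :=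
  W + Φᴴ * ((Φ * Φᴴ)⁻¹ * (Y - Φ * W))

lemma mul_nullSpaceTuning (hinv : IsUnit (Φ * Φᴴ)) (Y : Matrix (Fin M) (Fin L) ℂ)
    (W : Matrix (Fin N) (Fin L) ℂ) : Φ * nullSpaceTuning Φ Y W = Y := by
  rw [nullSpaceTuning, Matrix.mul_add, ← Matrix.mul_assoc,
    mul_nonsing_inv_cancel_left _ _ ((isUnit_iff_isUnit_det _).mp hinv), add_sub_cancel]

lemma sub_nullSpaceTuning (X W : Matrix (Fin N) (Fin L) ℂ) (E : Matrix (Fin M) (Fin L) ℂ) :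
    X - nullSpaceTuning Φ (Φ * X + E) W =
      (X - W - rowSpaceProj Φ * (X - W)) - ((Φ * Φᴴ)⁻¹ * Φ)ᴴ * E := by
  rw [nullSpaceTuning, conjTranspose_mul, (isHermitian_mul_conjTranspose_self Φ).inv.eq,
    rowSpaceProj,
    show Φ * X + E - Φ * W = Φ * (X - W) + E by rw [Matrix.mul_sub]; abel]
  simp only [Matrix.mul_add, Matrix.mul_assoc]
  abel

lemma frobNorm_rowRestrict_sub_rowSpaceProj_mul_sub_le (hinv : IsUnit (Φ * Φᴴ)) {t t' : ℕ}
    {γ θ : ℝ} (hγ : 0 ≤ γ) (hPRIC : IsPRIC L Φ t γ)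
    (hURIC : IsUpperRIC L ((Φ * Φᴴ)⁻¹ * Φ) t' θ) {U : Finset (Fin N)} (hUt : U.card ≤ t)
    (hUt' : U.card ≤ t') {V : Matrix (Fin N) (Fin L) ℂ} (hV : (rowSupp V).card ≤ t)
    (E : Matrix (Fin M) (Fin L) ℂ) :
    frobNorm (rowRestrict U ((V - rowSpaceProj Φ * V) - ((Φ * Φᴴ)⁻¹ * Φ)ᴴ * E)) ≤
      γ * frobNorm V + √(1 + θ) * frobNorm E := by
  set P := rowSpaceProj Φ
  set B := (Φ * Φᴴ)⁻¹ * Φ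
  set Z := rowRestrict U (V - P * V - Bᴴ * E)
  have hZ : (rowSupp Z).card ≤ t := (Finset.card_le_card (rowSupp_rowRestrict_subset _ _)).trans hUt
  have hZ' : (rowSupp Z).card ≤ t' :=
    (Finset.card_le_card (rowSupp_rowRestrict_subset _ _)).trans hUt'
  have hP : P.IsHermitian := isHermitian_rowSpaceProj Φ
  have hPP : IsIdempotentElem P := isIdempotentElem_rowSpaceProj hinv
  have hPZ : frobNorm (Z - P * Z) ≤ √γ * frobNorm Z := le_sqrt_mul_of_sq_le (frobNorm_nonneg _)
    (hPRIC.frobNorm_sub_rowSpaceProj_mul_sq_le hinv hZ)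
  have hPV : frobNorm (V - P * V) ≤ √γ * frobNorm V := le_sqrt_mul_of_sq_le (frobNorm_nonneg _)
    (hPRIC.frobNorm_sub_rowSpaceProj_mul_sq_le hinv hV)
  have hBZ : frobNorm (B * Z) ≤ √(1 + θ) * frobNorm Z :=
    le_sqrt_mul_of_sq_le (frobNorm_nonneg _) (hURIC Z hZ')
  have hsq : frobNorm Z ^ 2 = (⟪Z - P * Z, V - P * V⟫_F).re - (⟪B * Z, E⟫_F).re := by
    rw [frobNorm_sq_eq_re_inner, ← inner_rowRestrict_left, map_sub, inner_sub_right,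
      inner_sub_proj_right hP hPP, ← inner_frobEmb_mul_left, Complex.sub_re]
  have h1 := (abs_le.1 (abs_re_inner_frobEmb_le (Z - P * Z) (V - P * V))).2
  have h2 := (abs_le.1 (abs_re_inner_frobEmb_le (B * Z) E)).1
  refine le_of_sq_le_mul (add_nonneg (mul_nonneg hγ (frobNorm_nonneg _))
    (mul_nonneg (Real.sqrt_nonneg _) (frobNorm_nonneg _))) ?_
  calc frobNorm Z ^ 2
      ≤ frobNorm (Z - P * Z) * frobNorm (V - P * V) + frobNorm (B * Z) * frobNorm E := by
        linarith
    _ ≤ √γ * frobNorm Z * (√γ * frobNorm V) + √(1 + θ) * frobNorm Z * frobNorm E := by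
        gcongr
        · exact frobNorm_nonneg _
        · exact mul_nonneg (Real.sqrt_nonneg _) (frobNorm_nonneg _)
        · exact frobNorm_nonneg _
    _ = frobNorm Z * (γ * frobNorm V + √(1 + θ) * frobNorm E) := by
        rw [mul_mul_mul_comm, Real.mul_self_sqrt hγ]; ring

end NullSpaceTuning

section Feedback

variable {M N L : ℕ} {Φ : Matrix (Fin M) (Fin N) ℂ} {T : Finset (Fin N)}

lemma mul_rowRestrict (Φ : Matrix (Fin M) (Fin N) ℂ) (T : Finset (Fin N))
    (Z : Matrix (Fin N) (Fin L) ℂ) : Φ * rowRestrict T Z = colSub Φ T * rowSub T Z := by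
  ext a b
  simp only [mul_apply, rowRestrict, mul_ite, mul_zero, Finset.sum_ite_mem, Finset.univ_inter]
  exact (Finset.sum_coe_sort T fun i => Φ a i * Z i b).symm

lemma mul_eq_colSub_mul_add_colSub_compl_mul (Φ : Matrix (Fin M) (Fin N) ℂ)
    (T : Finset (Fin N)) (Z : Matrix (Fin N) (Fin L) ℂ) :
    Φ * Z = colSub Φ T * rowSub T Z + colSub Φ Tᶜ * rowSub Tᶜ Z := by
  rw [← mul_rowRestrict, ← mul_rowRestrict, ← Matrix.mul_add]
  congr 1
  ext i j
  by_cases h : i ∈ T <;> simp [rowRestrict, h]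

lemma conjTranspose_colSub_mul_sub_feedback (hT : IsUnit ((colSub Φ T)ᴴ * colSub Φ T))
    (X : Matrix (Fin N) (Fin L) ℂ) :
    (colSub Φ T)ᴴ * (Φ * (X - feedback Φ T X)) = 0 := by
  set C := colSub Φ T
  set D := colSub Φ Tᶜ * rowSub Tᶜ X
  have hW : Φ * feedback Φ T X = C * rowSub T X + C * ((Cᴴ * C)⁻¹ * (Cᴴ * D)) := by
    have hsupp := rowRestrict_eq_self (rowSupp_feedback_subset Φ T X)
    have hrow : rowSub T (feedback Φ T X) = rowSub T X + (Cᴴ * C)⁻¹ * Cᴴ * D := by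
      ext i j
      exact dif_pos i.2
    rw [← hsupp, mul_rowRestrict, hrow, Matrix.mul_add, Matrix.mul_assoc _ Cᴴ]
  rw [Matrix.mul_sub, hW, mul_eq_colSub_mul_add_colSub_compl_mul Φ T X, add_sub_add_left_eq_sub,
    Matrix.mul_sub, ← Matrix.mul_assoc Cᴴ C,
    mul_nonsing_inv_cancel_left _ _ ((isUnit_iff_isUnit_det _).mp hT), sub_self]

lemma rowRestrict_conjTranspose_mul_eq_zero {K : Matrix (Fin M) (Fin L) ℂ}
    (h : (colSub Φ T)ᴴ * K = 0) : rowRestrict T (Φᴴ * K) = 0 := by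
  ext i j
  by_cases hi : i ∈ T
  · rw [rowRestrict, if_pos hi]
    exact congrFun (congrFun h ⟨i, hi⟩) j
  · simp [rowRestrict, hi]

end Feedback

section RIC

variable {M N L t : ℕ} {Φ : Matrix (Fin M) (Fin N) ℂ} {δ : ℝ}

lemma IsRIC.frobNorm_mul_le (h : IsRIC L Φ t δ) {Z : Matrix (Fin N) (Fin L) ℂ}
    (hZ : (rowSupp Z).card ≤ t) : frobNorm (Φ * Z) ≤ √(1 + δ) * frobNorm Z :=
  le_sqrt_mul_of_sq_le (frobNorm_nonneg _) (h Z hZ).2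

lemma IsRIC.re_inner_sub_re_inner_mul_le_sq_add_sq (h : IsRIC L Φ t δ)
    {Z₁ Z₂ : Matrix (Fin N) (Fin L) ℂ} (hcard : (rowSupp Z₁ ∪ rowSupp Z₂).card ≤ t) :
    (⟪Z₁, Z₂⟫_F).re - (⟪Φ * Z₁, Φ * Z₂⟫_F).re ≤
      δ * (frobNorm Z₁ ^ 2 + frobNorm Z₂ ^ 2) / 2 := by
  have h₁ := (h (Z₁ + Z₂) ((Finset.card_le_card (rowSupp_add_subset _ _)).trans hcard)).1
  have h₂ := (h (Z₁ - Z₂) ((Finset.card_le_card (rowSupp_sub_subset _ _)).trans hcard)).2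
  rw [Matrix.mul_add, frobNorm_add_sq, frobNorm_add_sq] at h₁
  rw [Matrix.mul_sub, frobNorm_sub_sq, frobNorm_sub_sq] at h₂
  linarith

lemma IsRIC.re_inner_sub_re_inner_mul_le (h : IsRIC L Φ t δ)
    {Z₁ Z₂ : Matrix (Fin N) (Fin L) ℂ} (hcard : (rowSupp Z₁ ∪ rowSupp Z₂).card ≤ t) :
    (⟪Z₁, Z₂⟫_F).re - (⟪Φ * Z₁, Φ * Z₂⟫_F).re ≤ δ * (frobNorm Z₁ * frobNorm Z₂) := by
  set a := frobNorm Z₁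
  set b := frobNorm Z₂
  have ha : 0 ≤ a := frobNorm_nonneg _
  have hb : 0 ≤ b := frobNorm_nonneg _
  rcases (mul_nonneg ha hb).eq_or_lt with hab | hab
  · rw [← hab, mul_zero]
    rcases mul_eq_zero.1 hab.symm with h0 | h0 <;> simp [frobNorm_eq_zero.1 h0]
  -- rescale to `b • Z₁` and `a • Z₂`, which have equal norms `a * b`
  have key := h.re_inner_sub_re_inner_mul_le_sq_add_sq (Z₁ := (b : ℂ) • Z₁) (Z₂ := (a : ℂ) • Z₂)
    ((Finset.card_le_card (Finset.union_subset_union (rowSupp_smul_subset _ _)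
      (rowSupp_smul_subset _ _))).trans hcard)
  simp only [Matrix.mul_smul, map_smul, inner_smul_left, inner_smul_right, frobNorm_eq_norm,
    norm_smul, Complex.conj_ofReal, Complex.re_ofReal_mul, Complex.norm_real, Real.norm_eq_abs,
    abs_of_nonneg ha, abs_of_nonneg hb] at key
  rw [← frobNorm_eq_norm, ← frobNorm_eq_norm] at key
  nlinarith

end RIC

section OneStep

variable {M N L : ℕ} {Φ : Matrix (Fin M) (Fin N) ℂ} {T : Finset (Fin N)}
  {X Xs : Matrix (Fin N) (Fin L) ℂ} {E : Matrix (Fin M) (Fin L) ℂ}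

lemma frobNorm_rowRestrict_sub_feedback_le {t : ℕ} {δ : ℝ} (hδ : 0 ≤ δ)
    (hRIC : IsRIC L Φ t δ) (hT : IsUnit ((colSub Φ T)ᴴ * colSub Φ T))
    (hXs : Φ * Xs = Φ * X + E) (hcard : (rowSupp X).card + T.card ≤ t) :
    frobNorm (rowRestrict T (X - feedback Φ T Xs)) ≤
      δ * frobNorm (X - feedback Φ T Xs) + √(1 + δ) * frobNorm E := by
  set V := X - feedback Φ T Xs
  set VT := rowRestrict T V
  have hV : rowSupp V ⊆ rowSupp X ∪ T :=
    (rowSupp_sub_subset _ _).trans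
      (Finset.union_subset_union subset_rfl (rowSupp_feedback_subset Φ T Xs))
  have hVT : rowSupp VT ⊆ T := rowSupp_rowRestrict_subset T V
  have hcardV : (rowSupp VT ∪ rowSupp V).card ≤ t :=
    ((Finset.card_le_card (Finset.union_subset (hVT.trans Finset.subset_union_right) hV)).trans
      (Finset.card_union_le _ _)).trans hcard
  have hcardVT : (rowSupp VT).card ≤ t := (Finset.card_le_card hVT).trans (by omega)
  have hnormal : ⟪VT, Φᴴ * (Φ * V + E)⟫_F = 0 := by
    have : Φ * V + E = Φ * (Xs - feedback Φ T Xs) := by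
      rw [Matrix.mul_sub, Matrix.mul_sub, hXs]; abel
    rw [this, inner_rowRestrict_left,
      rowRestrict_conjTranspose_mul_eq_zero (conjTranspose_colSub_mul_sub_feedback hT Xs),
      map_zero, inner_zero_right]
  have hsq : frobNorm VT ^ 2 =
      ((⟪VT, V⟫_F).re - (⟪Φ * VT, Φ * V⟫_F).re) - (⟪Φ * VT, E⟫_F).re := by
    rw [Matrix.mul_add, map_add, inner_add_right, ← inner_frobEmb_mul_left,
      ← inner_frobEmb_mul_left] at hnormal
    rw [frobNorm_sq_eq_re_inner, ← inner_rowRestrict_left]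
    have := congrArg Complex.re hnormal
    rw [Complex.add_re, Complex.zero_re] at this
    linarith
  have h1 := hRIC.re_inner_sub_re_inner_mul_le hcardV
  have h2 := (abs_le.1 (abs_re_inner_frobEmb_le (Φ * VT) E)).1
  have h3 := hRIC.frobNorm_mul_le hcardVT
  refine le_of_sq_le_mul (add_nonneg (mul_nonneg hδ (frobNorm_nonneg _))
    (mul_nonneg (Real.sqrt_nonneg _) (frobNorm_nonneg _))) ?_
  calc frobNorm VT ^ 2 ≤ δ * (frobNorm VT * frobNorm V) + frobNorm (Φ * VT) * frobNorm E := by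
        linarith
    _ ≤ δ * (frobNorm VT * frobNorm V) + √(1 + δ) * frobNorm VT * frobNorm E := by
        gcongr
        exact frobNorm_nonneg _
    _ = frobNorm VT * (δ * frobNorm V + √(1 + δ) * frobNorm E) := by ring

lemma frobNorm_rowRestrict_compl_sub_le {W Q : Matrix (Fin N) (Fin L) ℂ}
    {R : Matrix (Fin L) (Fin L) ℂ} {α : ℝ} (hW : rowSupp W ⊆ T) (hXs : Xs = Q * R)
    (hR : IsUnit R) (hα : 1 ≤ α) (hcond : sigmaMax R ≤ α * sigmaMin R)
    (hcard : (rowSupp X).card ≤ T.card)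
    (hsel : ∀ i ∈ T, ∀ m ∉ T, vecNorm (Q m) ≤ vecNorm (Q i)) :
    frobNorm (rowRestrict Tᶜ (X - W)) ≤
      √2 * α * frobNorm (rowRestrict ((rowSupp X \ T) ∪ (T \ rowSupp X)) (X - Xs)) := by
  set S := rowSupp X
  set G := X - Xs
  have hmissed : rowRestrict Tᶜ (X - W) = rowRestrict (S \ T) G + rowRestrict (S \ T) Xs := by
    rw [← rowRestrict_add, sub_add_cancel]
    ext i j
    by_cases hiT : i ∈ T
    · simp [rowRestrict, hiT]
    · have hWi : W i j = 0 := congrFun (rowSupp_subset_iff.1 hW i hiT) j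
      by_cases hiS : i ∈ S
      · simp [rowRestrict, hiT, hiS, hWi]
      · simp [rowRestrict, hiT, hiS, hWi, congrFun (row_eq_zero_of_notMem_rowSupp hiS) j]
  have hfalse : rowRestrict (T \ S) Xs = -rowRestrict (T \ S) G := by
    rw [rowRestrict_sub, rowRestrict_eq_zero Finset.sdiff_disjoint, zero_sub, neg_neg]
  have hpyth : frobNorm (rowRestrict (S \ T) G) ^ 2 + frobNorm (rowRestrict (T \ S) G) ^ 2 =
      frobNorm (rowRestrict ((S \ T) ∪ (T \ S)) G) ^ 2 := by
    rw [frobNorm_rowRestrict_sq, frobNorm_rowRestrict_sq, frobNorm_rowRestrict_sq,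
      Finset.sum_union disjoint_sdiff_sdiff]
  calc frobNorm (rowRestrict Tᶜ (X - W))
      ≤ frobNorm (rowRestrict (S \ T) G) + α * frobNorm (rowRestrict (T \ S) Xs) := by
        rw [hmissed]
        refine (frobNorm_add_le _ _).trans (add_le_add_right ?_ _)
        exact frobNorm_rowRestrict_sdiff_le hXs hR (by linarith) hcond hcard hsel
    _ = frobNorm (rowRestrict (S \ T) G) + α * frobNorm (rowRestrict (T \ S) G) := by
        rw [hfalse, frobNorm_neg]
    _ ≤ _ := add_mul_le_sqrt_two_mul (frobNorm_nonneg _) (frobNorm_nonneg _) hα hpyth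

end OneStep

theorem frobNorm_sub_feedback_le {M N L : ℕ} {Φ : Matrix (Fin M) (Fin N) ℂ}
    (hinv : IsUnit (Φ * Φᴴ)) {X Wp Xs Q : Matrix (Fin N) (Fin L) ℂ}
    {E Y : Matrix (Fin M) (Fin L) ℂ} {R : Matrix (Fin L) (Fin L) ℂ} {T : Finset (Fin N)}
    {t t' : ℕ} {δ γ θ α : ℝ} (hδ0 : 0 ≤ δ) (hδ1 : δ < 1) (hγ : 0 ≤ γ) (hα : 1 ≤ α)
    (hRIC : IsRIC L Φ t δ) (hPRIC : IsPRIC L Φ t γ)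
    (hURIC : IsUpperRIC L ((Φ * Φᴴ)⁻¹ * Φ) t' θ)
    (hcard : (rowSupp X).card ≤ T.card) (ht : (rowSupp X).card + T.card ≤ t)
    (ht' : (rowSupp X).card + T.card ≤ t') (hWp : (rowSupp (X - Wp)).card ≤ t)
    (hY : Y = Φ * X + E) (hXs : Xs = nullSpaceTuning Φ Y Wp)
    (hQR : Xs = Q * R) (hR : IsUnit R) (hcond : sigmaMax R ≤ α * sigmaMin R)
    (hsel : ∀ i ∈ T, ∀ m ∉ T, vecNorm (Q m) ≤ vecNorm (Q i))
    (hT : IsUnit ((colSub Φ T)ᴴ * colSub Φ T)) :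
    frobNorm (X - feedback Φ T Xs) ≤
      √2 * α * γ / √(1 - δ ^ 2) * frobNorm (X - Wp) +
        (√(1 + δ) / (1 - δ) + √2 * α * √(1 + θ) / √(1 - δ ^ 2)) * frobNorm E := by
  set U := (rowSupp X \ T) ∪ (T \ rowSupp X)
  have hU : U.card ≤ (rowSupp X).card + T.card :=
    (Finset.card_le_card (Finset.union_subset_union Finset.sdiff_subset Finset.sdiff_subset)).trans
      (Finset.card_union_le _ _)
  have hnst :
      frobNorm (rowRestrict U (X - Xs)) ≤ γ * frobNorm (X - Wp) + √(1 + θ) * frobNorm E := by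
    rw [hXs, hY, sub_nullSpaceTuning]
    exact frobNorm_rowRestrict_sub_rowSpaceProj_mul_sub_le hinv hγ hPRIC hURIC (hU.trans ht)
      (hU.trans ht') hWp E
  have htail := frobNorm_rowRestrict_compl_sub_le (rowSupp_feedback_subset Φ T Xs) hQR hR hα hcond
    hcard hsel
  have hhead := frobNorm_rowRestrict_sub_feedback_le hδ0 hRIC hT
    (show Φ * Xs = Φ * X + E by rw [hXs, mul_nullSpaceTuning hinv, hY]) ht
  set a := √2 * α * (γ * frobNorm (X - Wp) + √(1 + θ) * frobNorm E)
  set b := √(1 + δ) * frobNorm E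
  have ha0 : 0 ≤ a := mul_nonneg (by positivity) (add_nonneg
    (mul_nonneg hγ (frobNorm_nonneg _)) (mul_nonneg (Real.sqrt_nonneg _) (frobNorm_nonneg _)))
  have ha : frobNorm (rowRestrict Tᶜ (X - feedback Φ T Xs)) ≤ a :=
    htail.trans (mul_le_mul_of_nonneg_left hnst (by positivity))
  have hsq : frobNorm (X - feedback Φ T Xs) ^ 2 ≤
      (δ * frobNorm (X - feedback Φ T Xs) + b) ^ 2 + a ^ 2 := by
    rw [frobNorm_sq_eq_add_compl T]
    gcongr <;> exact frobNorm_nonneg _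
  refine (le_div_sqrt_add_div_of_sq_le ha0
    (mul_nonneg (Real.sqrt_nonneg _) (frobNorm_nonneg _)) hδ0 hδ1 hsq).trans (le_of_eq ?_)
  simp only [a]
  ring

theorem stmt13_general {M N L s : ℕ} (Φ : Matrix (Fin M) (Fin N) ℂ) (hinv : IsUnit (Φ * Φᴴ))
    (X : Matrix (Fin N) (Fin L) ℂ) (E : Matrix (Fin M) (Fin L) ℂ)
    (Y : Matrix (Fin M) (Fin L) ℂ) (hY : Y = Φ * X + E)
    (hXs : (rowSupp X).card ≤ s)
    (f : ℕ → ℕ) (hfmono : Monotone f) (hfs : ∀ j, 1 ≤ j → s ≤ f j)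
    (k : ℕ)
    (δ γ θ α : ℝ) (hδ0 : 0 ≤ δ) (hδ1 : δ < 1) (hγ : 0 ≤ γ) (hα : 1 ≤ α)
    (hRIC : IsRIC L Φ (s + f k + f (k - 1)) δ)
    (hPRIC : IsPRIC L Φ (s + f k + f (k - 1)) γ)
    (hURIC : IsUpperRIC L ((Φ * Φᴴ)⁻¹ * Φ) (s + f k) θ)
    (W Xs Q : ℕ → Matrix (Fin N) (Fin L) ℂ) (Rm : ℕ → Matrix (Fin L) (Fin L) ℂ)
    (T : ℕ → Finset (Fin N))
    (hW0 : W 0 = 0)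
    (hNST : ∀ j, 1 ≤ j → j ≤ k →
      Xs j = W (j - 1) + Φᴴ * ((Φ * Φᴴ)⁻¹ * (Y - Φ * W (j - 1))))
    (hQR : ∀ j, 1 ≤ j → j ≤ k →
      (Q j)ᴴ * Q j = 1 ∧ IsUnit (Rm j) ∧ Xs j = Q j * Rm j ∧
        sigmaMax (Rm j) ≤ α * sigmaMin (Rm j))
    (hTsel : ∀ j, 1 ≤ j → j ≤ k →
      (T j).card = f j ∧ ∀ i ∈ T j, ∀ m ∉ T j, vecNorm (Q j m) ≤ vecNorm (Q j i))
    (hTinv : ∀ j, 1 ≤ j → j ≤ k → IsUnit ((colSub Φ (T j))ᴴ * colSub Φ (T j)))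
    (hFB : ∀ j, 1 ≤ j → j ≤ k → W j = feedback Φ (T j) (Xs j)) :
    frobNorm (X - W k) ≤
      Real.sqrt (2 * α ^ 2 * γ ^ 2 / (1 - δ ^ 2)) ^ k * frobNorm (X - W 0) +
        (Real.sqrt (1 + δ) / (1 - δ) +
            Real.sqrt (2 * α ^ 2 * (1 + θ)) / Real.sqrt (1 - δ ^ 2)) *
          (∑ j ∈ Finset.range k, Real.sqrt (2 * α ^ 2 * γ ^ 2 / (1 - δ ^ 2)) ^ j) *
          frobNorm E := by
  have hρ : √(2 * α ^ 2 * γ ^ 2 / (1 - δ ^ 2)) = √2 * α * γ / √(1 - δ ^ 2) := by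
    rw [Real.sqrt_div' _ (by nlinarith), Real.sqrt_mul (by positivity), Real.sqrt_mul (by norm_num),
      Real.sqrt_sq (by linarith), Real.sqrt_sq hγ]
  have hκ : √(2 * α ^ 2 * (1 + θ)) = √2 * α * √(1 + θ) := by
    rw [Real.sqrt_mul (by positivity), Real.sqrt_mul (by norm_num), Real.sqrt_sq (by linarith)]
  rw [hρ, hκ]
  set ρ := √2 * α * γ / √(1 - δ ^ 2)
  set κ := √(1 + δ) / (1 - δ) + √2 * α * √(1 + θ) / √(1 - δ ^ 2)
  have hstep (j : ℕ) (hj : j < k) :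
      frobNorm (X - W (j + 1)) ≤ ρ * frobNorm (X - W j) + κ * frobNorm E := by
    obtain ⟨-, hR, hQR, hcond⟩ := hQR (j + 1) (by omega) hj
    obtain ⟨hTcard, hsel⟩ := hTsel (j + 1) (by omega) hj
    have hprev : (rowSupp (X - W j)).card ≤ s + f k + f (k - 1) := by
      rcases Nat.eq_zero_or_pos j with rfl | hj0
      · rw [hW0, sub_zero]; omega
      · have := card_rowSupp_sub_le (X := X) (hFB j hj0 (by omega) ▸ rowSupp_feedback_subset ..)
        have := (hTsel j hj0 (by omega)).1
        have := hfmono (show j ≤ k - 1 by omega)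
        omega
    have := hfs (j + 1) (by omega)
    have := hfmono (show j + 1 ≤ k by omega)
    rw [hFB (j + 1) (by omega) hj]
    exact frobNorm_sub_feedback_le hinv hδ0 hδ1 hγ hα hRIC hPRIC hURIC (by omega) (by omega)
      (by omega) hprev hY (hNST (j + 1) (by omega) hj) hQR hR hcond hsel
      (hTinv (j + 1) (by omega) hj)
  have hρ0 : 0 ≤ ρ :=
    div_nonneg (mul_nonneg (mul_nonneg (Real.sqrt_nonneg _) (by linarith)) hγ) (Real.sqrt_nonneg _)
  exact (le_geom_of_succ_le (e := fun j => frobNorm (X - W j)) hρ0 hstep).trans (le_of_eq (by ring))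

/-- Theorem 1 of the paper (error bound for the OSNST+HT+f-FB iterates). -/
theorem stmt13 {M N L s : ℕ} (Φ : Matrix (Fin M) (Fin N) ℂ) (hinv : IsUnit (Φ * Φᴴ))
    (X : Matrix (Fin N) (Fin L) ℂ) (E : Matrix (Fin M) (Fin L) ℂ)
    (Y : Matrix (Fin M) (Fin L) ℂ) (hY : Y = Φ * X + E)
    (hXs : (rowSupp X).card ≤ s)
    (f : ℕ → ℕ) (hfmono : Monotone f) (hfs : ∀ j, 1 ≤ j → s ≤ f j) (hf0 : f 0 = 0)
    (k : ℕ) (hk : 1 ≤ k)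
    (δ γ θ α : ℝ) (hδ0 : 0 ≤ δ) (hδ1 : δ < 1) (hγ : 0 ≤ γ) (hθ : 0 ≤ θ) (hα : 1 ≤ α)
    (hRIC : IsRIC L Φ (s + f k + f (k - 1)) δ)
    (hPRIC : IsPRIC L Φ (s + f k + f (k - 1)) γ)
    (hURIC : IsUpperRIC L ((Φ * Φᴴ)⁻¹ * Φ) (s + f k) θ)
    (W Xs Q : ℕ → Matrix (Fin N) (Fin L) ℂ) (Rm : ℕ → Matrix (Fin L) (Fin L) ℂ)
    (T : ℕ → Finset (Fin N))
    (hW0 : W 0 = 0)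
    (hNST : ∀ j, 1 ≤ j → j ≤ k →
      Xs j = W (j - 1) + Φᴴ * ((Φ * Φᴴ)⁻¹ * (Y - Φ * W (j - 1))))
    (hQR : ∀ j, 1 ≤ j → j ≤ k →
      (Q j)ᴴ * Q j = 1 ∧ IsUnit (Rm j) ∧ Xs j = Q j * Rm j ∧
        sigmaMax (Rm j) ≤ α * sigmaMin (Rm j))
    (hTsel : ∀ j, 1 ≤ j → j ≤ k →
      (T j).card = f j ∧ ∀ i ∈ T j, ∀ m ∉ T j, vecNorm (Q j m) ≤ vecNorm (Q j i))
    (hTinv : ∀ j, 1 ≤ j → j ≤ k → IsUnit ((colSub Φ (T j))ᴴ * colSub Φ (T j)))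
    (hFB : ∀ j, 1 ≤ j → j ≤ k → W j = feedback Φ (T j) (Xs j)) :
    frobNorm (X - W k) ≤
      Real.sqrt (2 * α ^ 2 * γ ^ 2 / (1 - δ ^ 2)) ^ k * frobNorm (X - W 0) +
        (Real.sqrt (1 + δ) / (1 - δ) +
            Real.sqrt (2 * α ^ 2 * (1 + θ)) / Real.sqrt (1 - δ ^ 2)) *
          (∑ j ∈ Finset.range k, Real.sqrt (2 * α ^ 2 * γ ^ 2 / (1 - δ ^ 2)) ^ j) *
          frobNorm E :=
  stmt13_general Φ hinv X E Y hY hXs f hfmono hfs k δ γ θ α hδ0 hδ1 hγ hα hRIC hPRIC hURIC W Xs Q Rm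
    T hW0 hNST hQR hTsel hTinv hFB
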